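/- Let (Ω, μ) be a probability space and let Q_hyb, Q* : {0,1} × Ω → (0,1) be measurable with contrasts Δ_hyb(w) = Q_hyb(1,w) − Q_hyb(0,w) and Δ*(w) = Q*(1,w) − Q*(0,w). Suppose the balanced Bernoulli KL outcome loss satisfies ∫_Ω Σ_{a∈{0,1}} [Q*(a,w)·log(Q*(a,w)/Q_hyb(a,w)) + (1−Q*(a,w))·log((1−Q*(a,w))/(1−Q_hyb(a,w)))] dμ(w) ≤ ε_Y for some ε_Y ≥ 0. Then (∫_Ω (Δ_hyb(w) − Δ*(w))² dμ(w))^{1/2} ≤ 2·√(ε_Y). -/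

import Mathlib

/-!
Pinsker's inequality for Bernoulli laws, `2 (p - q)² ≤ KL(Bern p ‖ Bern q)`, holds because
`x ↦ KL(Bern p ‖ Bern x) - 2 (p - x)²` vanishes at `x = p` and has derivative
`(x - p)(1 - 2x)² / (x (1 - x))`, whose sign is that of `x - p`. Combined with
`(d₁ - d₀)² ≤ 2 (d₁² + d₀²)` for the arm-wise errors `dₐ = Q_hyb(a, ·) - Q*(a, ·)`, it bounds
the squared contrast error pointwise by the balanced loss; integrating gives even `√ε_Y`.
-/

open MeasureTheory Real Set

noncomputable def bernoulliKL (p q : ℝ) : ℝ :=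
  p * log (p / q) + (1 - p) * log ((1 - p) / (1 - q))

lemma bernoulliKL_one_sub (p q : ℝ) : bernoulliKL (1 - p) (1 - q) = bernoulliKL p q := by
  simp only [bernoulliKL, sub_sub_cancel]
  ring

-- `bernoulliKL p x - 2 (p - x) ^ 2` up to an additive constant.
lemma hasDerivAt_pinskerGap {p x : ℝ} (hx : x ∈ Ioo (0 : ℝ) 1) :
    HasDerivAt (fun x => -(p * log x) - (1 - p) * log (1 - x) - 2 * (p - x) ^ 2)
      ((x - p) * (1 - 2 * x) ^ 2 / (x * (1 - x))) x := by
  have hx0 : x ≠ 0 := hx.1.ne'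
  have hx1 : 1 - x ≠ 0 := (sub_pos.2 hx.2).ne'
  have hlog₁ := (hasDerivAt_log hx0).const_mul p
  have hlog₂ := ((hasDerivAt_log hx1).comp x ((hasDerivAt_id x).const_sub 1)).const_mul (1 - p)
  have hsq := (((hasDerivAt_id x).const_sub p).pow 2).const_mul 2
  refine ((hlog₁.neg.sub hlog₂).sub hsq).congr_deriv ?_
  simp only [id, Nat.cast_ofNat]
  field_simp
  ring

lemma two_mul_sq_le_bernoulliKL_of_le {p q : ℝ} (hp : 0 < p) (hpq : p ≤ q) (hq : q < 1) :
    2 * (p - q) ^ 2 ≤ bernoulliKL p q := by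
  set g : ℝ → ℝ := fun x => -(p * log x) - (1 - p) * log (1 - x) - 2 * (p - x) ^ 2
  have hsub : Icc p q ⊆ Ioo 0 1 := Icc_subset_Ioo hp hq
  have hmono : MonotoneOn g (Icc p q) := by
    refine monotoneOn_of_hasDerivWithinAt_nonneg (convex_Icc p q)
      (fun x hx => (hasDerivAt_pinskerGap (hsub hx)).continuousAt.continuousWithinAt)
      (fun x hx => (hasDerivAt_pinskerGap (hsub (interior_subset hx))).hasDerivWithinAt)
      (fun x hx => ?_)
    rw [interior_Icc] at hx
    have hx01 := hsub (Ioo_subset_Icc_self hx)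
    have : 0 < x * (1 - x) := mul_pos hx01.1 (sub_pos.2 hx01.2)
    exact div_nonneg (mul_nonneg (sub_nonneg.2 hx.1.le) (sq_nonneg _)) this.le
  have hgap : bernoulliKL p q - 2 * (p - q) ^ 2 = g q - g p := by
    have hq0 : 0 < q := hp.trans_le hpq
    simp only [bernoulliKL, g, log_div hp.ne' hq0.ne',
      log_div (sub_pos.2 (hpq.trans_lt hq)).ne' (sub_pos.2 hq).ne']
    ring
  have := hmono (left_mem_Icc.2 hpq) (right_mem_Icc.2 hpq) hpq
  linarith

lemma two_mul_sq_le_bernoulliKL {p q : ℝ} (hp : p ∈ Ioo (0 : ℝ) 1) (hq : q ∈ Ioo (0 : ℝ) 1) :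
    2 * (p - q) ^ 2 ≤ bernoulliKL p q := by
  rcases le_total p q with hpq | hqp
  · exact two_mul_sq_le_bernoulliKL_of_le hp.1 hpq hq.2
  · have := two_mul_sq_le_bernoulliKL_of_le (sub_pos.2 hp.2) (sub_le_sub_left hqp 1)
      (sub_lt_self 1 hq.1)
    rwa [bernoulliKL_one_sub, sub_sub_sub_cancel_left, ← neg_sub, neg_sq] at this

lemma sq_sub_sub_le_bernoulliKL_add {p₁ p₀ q₁ q₀ : ℝ} (hp₁ : p₁ ∈ Ioo (0 : ℝ) 1)
    (hp₀ : p₀ ∈ Ioo (0 : ℝ) 1) (hq₁ : q₁ ∈ Ioo (0 : ℝ) 1) (hq₀ : q₀ ∈ Ioo (0 : ℝ) 1) :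
    ((q₁ - q₀) - (p₁ - p₀)) ^ 2 ≤ bernoulliKL p₁ q₁ + bernoulliKL p₀ q₀ :=
  calc ((q₁ - q₀) - (p₁ - p₀)) ^ 2 = ((p₀ - q₀) + -(p₁ - q₁)) ^ 2 := by ring
    _ ≤ 2 * ((p₀ - q₀) ^ 2 + (-(p₁ - q₁)) ^ 2) := add_sq_le
    _ = 2 * (p₁ - q₁) ^ 2 + 2 * (p₀ - q₀) ^ 2 := by ring
    _ ≤ bernoulliKL p₁ q₁ + bernoulliKL p₀ q₀ :=
      add_le_add (two_mul_sq_le_bernoulliKL hp₁ hq₁) (two_mul_sq_le_bernoulliKL hp₀ hq₀)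

theorem hybrid_contrast_l2_from_outcome_loss_general {Ω : Type*} [MeasurableSpace Ω]
    (μ : Measure Ω)
    (Qhyb Qs : Bool → Ω → ℝ)
    (hQh01 : ∀ a w, Qhyb a w ∈ Set.Ioo (0 : ℝ) 1)
    (hQs01 : ∀ a w, Qs a w ∈ Set.Ioo (0 : ℝ) 1)
    (kl : Bool → Ω → ℝ)
    (hkl : ∀ a w, kl a w =
      Qs a w * Real.log (Qs a w / Qhyb a w) +
        (1 - Qs a w) * Real.log ((1 - Qs a w) / (1 - Qhyb a w)))
    (hklint : Integrable (fun w => kl true w + kl false w) μ)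
    (εY : ℝ)
    (hloss : ∫ w, (kl true w + kl false w) ∂μ ≤ εY) :
    Real.sqrt (∫ w,
        ((Qhyb true w - Qhyb false w) - (Qs true w - Qs false w)) ^ 2 ∂μ) ≤
      2 * Real.sqrt εY := by
  have hpointwise : ∀ w, ((Qhyb true w - Qhyb false w) - (Qs true w - Qs false w)) ^ 2 ≤
      kl true w + kl false w := fun w => by
    simpa only [hkl, bernoulliKL] using sq_sub_sub_le_bernoulliKL_add (hQs01 true w)
      (hQs01 false w) (hQh01 true w) (hQh01 false w)
  have hintegral : ∫ w, ((Qhyb true w - Qhyb false w) - (Qs true w - Qs false w)) ^ 2 ∂μ ≤ εY :=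
    (integral_mono_of_nonneg (ae_of_all _ fun _ => sq_nonneg _) hklint
      (ae_of_all _ hpointwise)).trans hloss
  calc _ ≤ sqrt εY := sqrt_le_sqrt hintegral
    _ ≤ 2 * sqrt εY := le_mul_of_one_le_left (sqrt_nonneg _) one_le_two

/-- On a probability space `(Ω, μ)`, for measurable conditional
outcome models `Q_hyb, Q* : {0,1} × Ω → (0,1)`, if the balanced Bernoulli KL
outcome loss of the hybrid model satisfies
`∫ Σ_{a∈{0,1}} KL(Bern(Q*(a,w)) ‖ Bern(Q_hyb(a,w))) dμ(w) ≤ ε_Y` for some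
`ε_Y ≥ 0`, then the contrast error satisfies
`‖Δ_hyb − Δ*‖_{L²(μ)} ≤ 2·√ε_Y`. -/
theorem hybrid_contrast_l2_from_outcome_loss {Ω : Type*} [MeasurableSpace Ω]
    (μ : Measure Ω) [IsProbabilityMeasure μ]
    (Qhyb Qs : Bool → Ω → ℝ)
    (hQhm : ∀ a, Measurable (Qhyb a)) (hQsm : ∀ a, Measurable (Qs a))
    (hQh01 : ∀ a w, Qhyb a w ∈ Set.Ioo (0 : ℝ) 1)
    (hQs01 : ∀ a w, Qs a w ∈ Set.Ioo (0 : ℝ) 1)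
    (kl : Bool → Ω → ℝ)
    (hkl : ∀ a w, kl a w =
      Qs a w * Real.log (Qs a w / Qhyb a w) +
        (1 - Qs a w) * Real.log ((1 - Qs a w) / (1 - Qhyb a w)))
    (hklint : Integrable (fun w => kl true w + kl false w) μ)
    (εY : ℝ) (hεY : 0 ≤ εY)
    (hloss : ∫ w, (kl true w + kl false w) ∂μ ≤ εY) :
    Real.sqrt (∫ w,
        ((Qhyb true w - Qhyb false w) - (Qs true w - Qs false w)) ^ 2 ∂μ) ≤
      2 * Real.sqrt εY :=
  hybrid_contrast_l2_from_outcome_loss_general μ Qhyb Qs hQh01 hQs01 kl hkl hklint εY hloss
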